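/- arXiv:0909.1833 — 3 statements merged into one kernel-verified Lean document; each statement's English description precedes it below -/
import Mathlib

section
/- With a_j = 1/j³, Φ has no derivative at 0 from the right: lim_{x→0+} Φ(x)/x = +∞, where Φ(x) = (4/x) · Σ_{j=1}^∞ sin²(xj/2)/j³ and Φ(0) = 0. -/
open Real Filter Set

noncomputable def Phi (x : ℝ) : ℝ :=
  (4 / x) * ∑' j : ℕ, Real.sin (x * (j + 1) / 2) ^ 2 / ((j : ℝ) + 1) ^ 3

lemma aux_summable (x : ℝ) :
    Summable (fun j : ℕ => Real.sin (x * (j + 1) / 2) ^ 2 / ((j : ℝ) + 1) ^ 3) := by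
  have hs : Summable (fun j : ℕ => 1 / ((j : ℝ) + 1) ^ 3) := by
    have := (Real.summable_one_div_nat_pow (p := 3)).mpr (by norm_num)
    have := (summable_nat_add_iff 1).mpr this
    simpa [add_comm] using this
  refine Summable.of_nonneg_of_le (fun j => by positivity) (fun j => ?_) hs
  have h1 : Real.sin (x * (j + 1) / 2) ^ 2 ≤ 1 := by
    have := Real.neg_one_le_sin (x * (j + 1) / 2)
    have := Real.sin_le_one (x * (j + 1) / 2)
    nlinarith
  gcongr
  all_goals first | positivity | exact h1

lemma aux_lower {x : ℝ} (hx : 0 < x) (hx1 : x < 1) :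
    (4 / Real.pi ^ 2) * Real.log (1 / x) ≤ Phi x / x := by
  set N := ⌊1 / x⌋₊ with hN
  have hπ := Real.pi_pos
  -- termwise bound on range N
  have key : ∀ j ∈ Finset.range N,
      x ^ 2 / (Real.pi ^ 2 * ((j : ℝ) + 1)) ≤
        Real.sin (x * (j + 1) / 2) ^ 2 / ((j : ℝ) + 1) ^ 3 := by
    intro j hj
    have hjN : (j : ℝ) + 1 ≤ 1 / x := by
      have : (j : ℕ) + 1 ≤ N := Finset.mem_range.mp hj
      calc ((j : ℝ) + 1) = ((j + 1 : ℕ) : ℝ) := by push_cast; ring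
        _ ≤ (N : ℝ) := by exact_mod_cast this
        _ ≤ 1 / x := Nat.floor_le (by positivity)
    have hxj : x * ((j : ℝ) + 1) ≤ 1 := by
      rw [le_div_iff₀ hx] at hjN; linarith [hjN]
    have hxj0 : 0 ≤ x * ((j : ℝ) + 1) / 2 := by positivity
    have hle : x * ((j : ℝ) + 1) / 2 ≤ Real.pi / 2 := by
      have : (1 : ℝ) ≤ Real.pi := by linarith [Real.pi_gt_three]
      linarith
    have hsin : 2 / Real.pi * (x * ((j : ℝ) + 1) / 2) ≤ Real.sin (x * ((j : ℝ) + 1) / 2) :=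
      Real.mul_le_sin hxj0 hle
    have hsin' : x * ((j : ℝ) + 1) / Real.pi ≤ Real.sin (x * ((j : ℝ) + 1) / 2) := by
      calc x * ((j : ℝ) + 1) / Real.pi = 2 / Real.pi * (x * ((j : ℝ) + 1) / 2) := by
            field_simp
        _ ≤ _ := hsin
    have hpos : 0 ≤ x * ((j : ℝ) + 1) / Real.pi := by positivity
    have hsq : (x * ((j : ℝ) + 1)) ^ 2 / Real.pi ^ 2 ≤ Real.sin (x * ((j : ℝ) + 1) / 2) ^ 2 := by
      have := pow_le_pow_left₀ hpos hsin' 2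
      calc (x * ((j : ℝ) + 1)) ^ 2 / Real.pi ^ 2 = (x * ((j : ℝ) + 1) / Real.pi) ^ 2 := by ring
        _ ≤ _ := this
    have hj1 : (0 : ℝ) < (j : ℝ) + 1 := by positivity
    rw [div_le_div_iff₀ (by positivity) (by positivity)]
    calc x ^ 2 * ((j : ℝ) + 1) ^ 3 = (x * ((j : ℝ) + 1)) ^ 2 / Real.pi ^ 2 *
          (Real.pi ^ 2 * ((j : ℝ) + 1)) := by field_simp
      _ ≤ Real.sin (x * ((j : ℝ) + 1) / 2) ^ 2 * (Real.pi ^ 2 * ((j : ℝ) + 1)) := by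
          gcongr
  -- finite sum ≤ tsum
  have hsum : ∑ j ∈ Finset.range N, x ^ 2 / (Real.pi ^ 2 * ((j : ℝ) + 1)) ≤
      ∑' j : ℕ, Real.sin (x * (j + 1) / 2) ^ 2 / ((j : ℝ) + 1) ^ 3 := by
    calc ∑ j ∈ Finset.range N, x ^ 2 / (Real.pi ^ 2 * ((j : ℝ) + 1))
        ≤ ∑ j ∈ Finset.range N, Real.sin (x * (j + 1) / 2) ^ 2 / ((j : ℝ) + 1) ^ 3 :=
          Finset.sum_le_sum key
      _ ≤ _ := Summable.sum_le_tsum _ (fun j _ => by positivity) (aux_summable x)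
  -- rewrite finite sum via harmonic
  have hharm : ∑ j ∈ Finset.range N, x ^ 2 / (Real.pi ^ 2 * ((j : ℝ) + 1)) =
      x ^ 2 / Real.pi ^ 2 * (harmonic N : ℝ) := by
    rw [harmonic]
    push_cast
    rw [Finset.mul_sum]
    refine Finset.sum_congr rfl fun j _ => ?_
    field_simp
  have hlog : Real.log (1 / x) ≤ (harmonic N : ℝ) := log_le_harmonic_floor _ (by positivity)
  have htsum : x ^ 2 / Real.pi ^ 2 * Real.log (1 / x) ≤
      ∑' j : ℕ, Real.sin (x * (j + 1) / 2) ^ 2 / ((j : ℝ) + 1) ^ 3 := by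
    refine le_trans ?_ hsum
    rw [hharm]
    gcongr
  -- conclude
  have hx2 : (0 : ℝ) < x ^ 2 := by positivity
  rw [Phi]
  have heq : (4 / x * ∑' j : ℕ, Real.sin (x * (j + 1) / 2) ^ 2 / ((j : ℝ) + 1) ^ 3) / x
      = 4 / (x * x) * ∑' j : ℕ, Real.sin (x * (j + 1) / 2) ^ 2 / ((j : ℝ) + 1) ^ 3 := by
    field_simp; try ring
  rw [heq]
  calc (4 / Real.pi ^ 2) * Real.log (1 / x)
        = 4 / (x * x) * (x ^ 2 / Real.pi ^ 2 * Real.log (1 / x)) := by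
          field_simp
      _ ≤ 4 / (x * x) * ∑' j : ℕ, Real.sin (x * (j + 1) / 2) ^ 2 / ((j : ℝ) + 1) ^ 3 := by
          gcongr <;> positivity

theorem phi_inverse_cube_no_derivative_at_zero :
    Filter.Tendsto (fun x : ℝ => Phi x / x) (nhdsWithin 0 (Set.Ioi 0)) Filter.atTop := by
  have hlog : Tendsto (fun x : ℝ => (4 / Real.pi ^ 2) * Real.log (1 / x))
      (nhdsWithin 0 (Set.Ioi 0)) atTop := by
    have h1 : Tendsto Real.log (nhdsWithin 0 (Set.Ioi 0)) atBot :=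
      Real.tendsto_log_nhdsGT_zero
    have h2 : Tendsto (fun x : ℝ => Real.log (1 / x)) (nhdsWithin 0 (Set.Ioi 0)) atTop := by
      have h3 : Tendsto (fun x : ℝ => -Real.log x) (nhdsWithin 0 (Set.Ioi 0)) atTop :=
        tendsto_neg_atBot_atTop.comp h1
      simpa [one_div, Real.log_inv] using h3
    exact h2.const_mul_atTop (by positivity)
  refine tendsto_atTop_mono' _ ?_ hlog
  filter_upwards [self_mem_nhdsWithin, Ioo_mem_nhdsGT_of_mem (by norm_num : (0:ℝ) ∈ Ico 0 1)]
    with x hx hx1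
  exact aux_lower hx hx1.2
end

section
/- For 1 < β < 2 and a_j = j^{-β}, one has lim_{x→0+} Φ(x) = +∞, where Φ(x) = (4/x) · Σ_{j=1}^∞ j^{-β} sin²(xj/2) = (2/x) Σ_{j=1}^∞ (1 − cos jx)/j^β. -/
open Real Filter Set

/-! Only the terms with `j + 1 ≤ n := ⌊1/x⌋₊` are needed. For them `x (j + 1) ∈ [0, 1]`, where
`1 - cos t ≥ t² / 4`, and `(j + 1)^β ≤ n^β`; summing `(j + 1)²` gives `∑ ≥ x² n^(3-β) / 12`, hence
`Φ(x) ≥ (n x) n^(2-β) / 6 ≥ n^(2-β) / 12` once `x ≤ 1/2`, and `n^(2-β) → ∞` as `x → 0+` since `β < 2`. -/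

lemma sq_div_four_le_one_sub_cos {t : ℝ} (ht : |t| ≤ 1) : t ^ 2 / 4 ≤ 1 - cos t := by
  have hcos := (abs_le.mp (cos_bound ht)).2
  have ht2 : t ^ 2 ≤ 1 := (sq_le_one_iff_abs_le_one t).mpr ht
  rw [pow_abs, show t ^ 4 = (t ^ 2) ^ 2 by ring, abs_of_nonneg (sq_nonneg _)] at hcos
  nlinarith [sq_nonneg t]

lemma summable_one_sub_cos_div_rpow {β : ℝ} (hβ : 1 < β) (x : ℝ) :
    Summable fun j : ℕ => (1 - cos (x * (j + 1))) / ((j : ℝ) + 1) ^ β := by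
  have hp : Summable fun j : ℕ => 1 / |(j : ℝ) + 1| ^ β :=
    (summable_one_div_nat_add_rpow 1 β).mpr hβ
  refine .of_nonneg_of_le (fun j => ?_) (fun j => ?_) (hp.mul_left 2)
  · exact div_nonneg (sub_nonneg.mpr (cos_le_one _)) (by positivity)
  · rw [abs_of_pos (by positivity), mul_one_div]
    gcongr
    linarith [neg_one_le_cos (x * (j + 1))]

lemma cube_div_three_le_sum_range_succ_sq (n : ℕ) :
    (n : ℝ) ^ 3 / 3 ≤ ∑ j ∈ Finset.range n, ((j : ℝ) + 1) ^ 2 := by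
  induction n with
  | zero => simp
  | succ n ih =>
    rw [Finset.sum_range_succ]
    push_cast
    nlinarith [(n.cast_nonneg : (0 : ℝ) ≤ n)]

lemma natFloor_inv_mul_le_one {x : ℝ} (hx : 0 < x) : ⌊x⁻¹⌋₊ * x ≤ 1 := by
  calc ⌊x⁻¹⌋₊ * x ≤ x⁻¹ * x := by gcongr; exact Nat.floor_le (by positivity)
    _ = 1 := inv_mul_cancel₀ hx.ne'

lemma one_sub_le_natFloor_inv_mul {x : ℝ} (hx : 0 < x) : 1 - x ≤ ⌊x⁻¹⌋₊ * x := by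
  calc 1 - x = (x⁻¹ - 1) * x := by field_simp
    _ ≤ ⌊x⁻¹⌋₊ * x := by gcongr; exact (Nat.sub_one_lt_floor _).le

lemma sq_mul_cube_div_rpow_le_tsum {β x : ℝ} (hβ : 1 < β) (hx : 0 ≤ x) {n : ℕ}
    (hnx : n * x ≤ 1) :
    x ^ 2 / 12 * ((n : ℝ) ^ 3 / (n : ℝ) ^ β)
      ≤ ∑' j : ℕ, (1 - cos (x * (j + 1))) / ((j : ℝ) + 1) ^ β := by
  have hterm : ∀ j ∈ Finset.range n,
      x ^ 2 / 4 * ((j : ℝ) + 1) ^ 2 / (n : ℝ) ^ β ≤ (1 - cos (x * (j + 1))) / ((j : ℝ) + 1) ^ β := by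
    intro j hj
    have hjn : (j : ℝ) + 1 ≤ n := by exact_mod_cast Finset.mem_range.mp hj
    have ht : |x * (j + 1)| ≤ 1 := by
      rw [abs_of_nonneg (by positivity)]
      nlinarith
    calc x ^ 2 / 4 * ((j : ℝ) + 1) ^ 2 / (n : ℝ) ^ β
        = (x * (j + 1)) ^ 2 / 4 / (n : ℝ) ^ β := by ring
      _ ≤ (1 - cos (x * (j + 1))) / (n : ℝ) ^ β := by gcongr; exact sq_div_four_le_one_sub_cos ht
      _ ≤ (1 - cos (x * (j + 1))) / ((j : ℝ) + 1) ^ β := by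
        gcongr
        exact sub_nonneg.mpr (cos_le_one _)
  calc x ^ 2 / 12 * ((n : ℝ) ^ 3 / (n : ℝ) ^ β)
      = x ^ 2 / 4 * ((n : ℝ) ^ 3 / 3) / (n : ℝ) ^ β := by ring
    _ ≤ x ^ 2 / 4 * (∑ j ∈ Finset.range n, ((j : ℝ) + 1) ^ 2) / (n : ℝ) ^ β := by
      gcongr; exact cube_div_three_le_sum_range_succ_sq n
    _ = ∑ j ∈ Finset.range n, x ^ 2 / 4 * ((j : ℝ) + 1) ^ 2 / (n : ℝ) ^ β := by
      rw [Finset.mul_sum, Finset.sum_div]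
    _ ≤ ∑ j ∈ Finset.range n, (1 - cos (x * (j + 1))) / ((j : ℝ) + 1) ^ β :=
      Finset.sum_le_sum hterm
    _ ≤ ∑' j : ℕ, (1 - cos (x * (j + 1))) / ((j : ℝ) + 1) ^ β :=
      (summable_one_sub_cos_div_rpow hβ x).sum_le_tsum _
        fun j _ => div_nonneg (sub_nonneg.mpr (cos_le_one _)) (by positivity)

lemma rpow_two_sub_div_twelve_le {β x : ℝ} (hβ : 1 < β) (hx : 0 < x) {n : ℕ}
    (hnx₁ : 1 / 2 ≤ n * x) (hnx₂ : n * x ≤ 1) :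
    (n : ℝ) ^ (2 - β) / 12 ≤ 2 / x * ∑' j : ℕ, (1 - cos (x * (j + 1))) / ((j : ℝ) + 1) ^ β := by
  have hn : (0 : ℝ) < n := pos_of_mul_pos_left (by linarith) hx.le
  have hrpow : (n : ℝ) ^ (2 - β) = n ^ 2 / n ^ β := by
    rw [rpow_sub hn, rpow_two]
  calc (n : ℝ) ^ (2 - β) / 12 = 1 / 2 * (n ^ 2 / n ^ β) / 6 := by rw [hrpow]; ring
    _ ≤ n * x * (n ^ 2 / n ^ β) / 6 := by gcongr
    _ = 2 / x * (x ^ 2 / 12 * ((n : ℝ) ^ 3 / (n : ℝ) ^ β)) := by field_simp; ring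
    _ ≤ _ := by gcongr; exact sq_mul_cube_div_rpow_le_tsum hβ hx.le hnx₂

theorem phi_strong_interaction_blowup (β : ℝ) (hβ1 : 1 < β) (hβ2 : β < 2) :
    Filter.Tendsto
      (fun x : ℝ => (2 / x) * ∑' j : ℕ, (1 - Real.cos (x * (j + 1))) / ((j : ℝ) + 1) ^ β)
      (nhdsWithin 0 (Set.Ioi 0)) Filter.atTop := by
  have hlower : ∀ᶠ x in nhdsWithin 0 (Ioi 0), (⌊x⁻¹⌋₊ : ℝ) ^ (2 - β) / 12
      ≤ (2 / x) * ∑' j : ℕ, (1 - cos (x * (j + 1))) / ((j : ℝ) + 1) ^ β := by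
    filter_upwards [Ioo_mem_nhdsGT (by norm_num : (0 : ℝ) < 1 / 2)] with x ⟨hx₀, hx⟩
    refine rpow_two_sub_div_twelve_le hβ1 hx₀ ?_ (natFloor_inv_mul_le_one hx₀)
    linarith [one_sub_le_natFloor_inv_mul hx₀]
  have hfloor : Tendsto (fun x : ℝ => (⌊x⁻¹⌋₊ : ℝ)) (nhdsWithin 0 (Ioi 0)) atTop :=
    tendsto_natCast_atTop_atTop.comp (tendsto_nat_floor_atTop.comp tendsto_inv_nhdsGT_zero)
  exact tendsto_atTop_mono' _ hlower
    (((tendsto_rpow_atTop (by linarith)).comp hfloor).atTop_div_const (by norm_num))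
end

section
/- For r ∈ (0,1), Σ_{k∈ℤ} 1/(r+k)² = π²/sin²(πr). -/
/-!
Parseval's identity on `[0, 1]` for `x ↦ exp (2πirx)`: its `n`-th Fourier coefficient is
`(exp (2πir) - 1) / (2πi (r - n))`, of squared modulus `sin² (πr) / (π² (r - n)²)`, while its
squared `L²` norm is `1`.
-/

open Real Complex MeasureTheory

lemma fourierCoeffOn_exp_two_pi_I_mul {r : ℝ} (hr : ∀ n : ℤ, r ≠ n) (n : ℤ) :
    fourierCoeffOn zero_lt_one (fun x : ℝ => cexp (2 * π * I * r * x)) n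
      = (cexp (2 * π * I * r) - 1) / (2 * π * I * (r - n)) := by
  have hc : 2 * (π : ℂ) * I * (r - n) ≠ 0 := by
    have : (r : ℂ) - n ≠ 0 := sub_ne_zero.mpr (by exact_mod_cast hr n)
    simp [Real.pi_ne_zero, I_ne_zero, this]
  have hintegrand : ∀ x : ℝ, fourier (-n) (x : AddCircle (1 - 0 : ℝ)) • cexp (2 * π * I * r * x)
      = cexp (2 * π * I * (r - n) * x) := fun x => by
    rw [smul_eq_mul, fourier_coe_apply, ← Complex.exp_add]
    push_cast
    ring_nf
  rw [fourierCoeffOn_eq_integral, funext hintegrand, integral_exp_mul_complex hc]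
  have hexp : 2 * (π : ℂ) * I * (r - n) * (1 : ℝ) = 2 * π * I * r - n * (2 * π * I) := by
    push_cast; ring
  rw [hexp, Complex.exp_sub, Complex.exp_int_mul_two_pi_mul_I]
  simp

lemma norm_exp_two_pi_I_mul_sub_one_sq (r : ℝ) :
    ‖cexp (2 * π * I * r) - 1‖ ^ 2 = 4 * Real.sin (π * r) ^ 2 := by
  have h := norm_exp_I_mul_ofReal_sub_one (2 * π * r)
  rw [show I * ((2 * π * r : ℝ) : ℂ) = 2 * π * I * r by push_cast; ring,
    show 2 * π * r / 2 = π * r by ring] at h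
  rw [h, norm_mul, mul_pow, Real.norm_eq_abs, sq_abs]
  norm_num

lemma norm_fourierCoeffOn_exp_two_pi_I_mul_sq {r : ℝ} (hr : ∀ n : ℤ, r ≠ n) (n : ℤ) :
    ‖fourierCoeffOn zero_lt_one (fun x : ℝ => cexp (2 * π * I * r * x)) n‖ ^ 2
      = Real.sin (π * r) ^ 2 / π ^ 2 * (1 / (r - n) ^ 2) := by
  have hden : ‖2 * (π : ℂ) * I * (r - n)‖ ^ 2 = 4 * π ^ 2 * (r - n) ^ 2 := by
    rw [show (r : ℂ) - n = ((r - n : ℝ) : ℂ) by push_cast; ring]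
    simp only [norm_mul, Complex.norm_ofNat, norm_real, norm_I, Real.norm_eq_abs,
      abs_of_pos pi_pos]
    rw [mul_pow, mul_pow, sq_abs]
    ring
  rw [fourierCoeffOn_exp_two_pi_I_mul hr, norm_div, div_pow, hden,
    norm_exp_two_pi_I_mul_sub_one_sq]
  field_simp

theorem hasSum_one_div_sub_int_sq {r : ℝ} (hr : ∀ n : ℤ, r ≠ n) :
    HasSum (fun n : ℤ => 1 / (r - n) ^ 2) (π ^ 2 / Real.sin (π * r) ^ 2) := by
  let f : ℝ → ℂ := fun x => cexp (2 * π * I * r * x)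
  have hf_norm (x : ℝ) : ‖f x‖ = 1 := by
    simp only [f]
    rw [show 2 * π * I * r * x = ((2 * π * r * x : ℝ) : ℂ) * I by push_cast; ring]
    exact norm_exp_ofReal_mul_I _
  have hf_memLp : MemLp f 2 (volume.restrict (Set.Ioc 0 1)) :=
    MemLp.of_bound (by fun_prop) 1 (.of_forall fun x => (hf_norm x).le)
  have hparseval := hasSum_sq_fourierCoeffOn zero_lt_one hf_memLp
  simp only [f, norm_fourierCoeffOn_exp_two_pi_I_mul_sq hr, hf_norm, one_pow,
    intervalIntegral.integral_const, sub_zero, inv_one, smul_eq_mul, mul_one] at hparseval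
  have hsin : Real.sin (π * r) ≠ 0 := by
    intro h
    obtain ⟨n, hn⟩ := Real.sin_eq_zero_iff.mp h
    exact hr n (mul_right_cancel₀ pi_ne_zero (hn.trans (mul_comm π r))).symm
  rwa [← hasSum_mul_left_iff (by positivity : Real.sin (π * r) ^ 2 / π ^ 2 ≠ 0),
    div_mul_div_cancel₀ (by positivity), div_self (by positivity)]

theorem sum_inv_sq_shifted (r : ℝ) (hr0 : 0 < r) (hr1 : r < 1) :
    ∑' k : ℤ, 1 / ((r : ℝ) + k) ^ 2 = Real.pi ^ 2 / Real.sin (Real.pi * r) ^ 2 := by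
  have hr : ∀ n : ℤ, r ≠ n := by
    rintro n rfl
    have : (0 : ℤ) < n ∧ n < 1 := ⟨by exact_mod_cast hr0, by exact_mod_cast hr1⟩
    omega
  simpa [Function.comp_def, sub_neg_eq_add] using
    ((Equiv.neg ℤ).hasSum_iff.mpr (hasSum_one_div_sub_int_sq hr)).tsum_eq
end
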